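/- arXiv:1804.04127 — 6 statements merged into one kernel-verified Lean document; each statement's English description precedes it below -/
import Mathlib

section
/- For distinct primes p and q, and integers 0 ≤ i < p, 0 ≤ j < q, if k and l are the unique integers with 0 ≤ k < p, 0 ≤ l < q and i·q + j = l·p + k, then the 2×2 rational matrices [[1/p, i/p],[0,1]]·[[1/q, j/q],[0,1]] and [[1/q, l/q],[0,1]]·[[1/p, k/p],[0,1]] are equal. -/
/-!
Read `!![a, b; 0, 1]` as the affine map `x ↦ a x + b`; then `P_i` is `x ↦ (x + i) / p`, and
`P_i Q_j` is `x ↦ (x + (i q + j)) / (p q)`. So the product depends on `i, j` only through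
`i q + j`, and symmetrically `Q_l P_k` only through `l p + k`.
-/

namespace Matrix

variable {K : Type*} [Field K]

theorem affine_mul_affine (a b c d : K) :
    !![a, b; 0, 1] * !![c, d; 0, 1] = !![a * c, a * d + b; 0, 1] := by
  simp

theorem edge_mul_edge (p q i j : K) (hq : q ≠ 0) :
    !![1 / p, i / p; 0, 1] * !![1 / q, j / q; 0, 1] =
      !![1 / (p * q), (i * q + j) / (p * q); 0, 1] := by
  have translation : 1 / p * (j / q) + i / p = (i * q + j) / (p * q) := by
    field_simp
    ring
  rw [affine_mul_affine, one_div_mul_one_div, translation]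

end Matrix

theorem meta_commutation_matrices_general (p q : ℕ)
    (i j k l : ℕ) (hk : k < p) (hl : l < q)
    (h : i * q + j = l * p + k) :
    (!![1 / (p : ℚ), (i : ℚ) / p; 0, 1] * !![1 / (q : ℚ), (j : ℚ) / q; 0, 1]) =
      (!![1 / (q : ℚ), (l : ℚ) / q; 0, 1] * !![1 / (p : ℚ), (k : ℚ) / p; 0, 1]) := by
  have hp : (p : ℚ) ≠ 0 := Nat.cast_ne_zero.mpr (Nat.zero_lt_of_lt hk).ne'
  have hq : (q : ℚ) ≠ 0 := Nat.cast_ne_zero.mpr (Nat.zero_lt_of_lt hl).ne'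
  have h' : (i * q + j : ℚ) = l * p + k := mod_cast h
  rw [Matrix.edge_mul_edge _ _ _ _ hq, Matrix.edge_mul_edge _ _ _ _ hp, h', mul_comm (q : ℚ)]

/-- Meta-commutation lemma for Conway's big picture edge operators:
if `i·q + j = l·p + k` with `0 ≤ k < p`, `0 ≤ l < q`, then
`P_i · Q_j = Q_l · P_k` as matrices over `ℚ`, where
`P_i = [[1/p, i/p],[0,1]]` and `Q_j = [[1/q, j/q],[0,1]]`. -/
theorem meta_commutation_matrices (p q : ℕ) (hp : p.Prime) (hq : q.Prime) (hpq : p ≠ q)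
    (i j k l : ℕ) (hi : i < p) (hj : j < q) (hk : k < p) (hl : l < q)
    (h : i * q + j = l * p + k) :
    (!![1 / (p : ℚ), (i : ℚ) / p; 0, 1] * !![1 / (q : ℚ), (j : ℚ) / q; 0, 1]) =
      (!![1 / (q : ℚ), (l : ℚ) / q; 0, 1] * !![1 / (p : ℚ), (k : ℚ) / p; 0, 1]) :=
  meta_commutation_matrices_general p q i j k l hk hl h
end

section
/- Consider the four matrices in PGL₂(ℚ) represented by e = [[1,0],[0,1]], x = [[1, 1/2],[0,1]], y = [[1,0],[4,1]], and xy, taken modulo Γ₀(8). Then x² ∈ Γ₀(8), y² ∈ Γ₀(8), and (xy)² ∈ Γ₀(8), and the images of x and y generate a group isomorphic to the Klein four-group C₂ × C₂ in the quotient ⟨Γ₀(8), x, y⟩/Γ₀(8). -/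
/-- Membership in (the image of) `Γ₀(N)` inside the units of `M₂(ℚ)`:
`A` comes from an integral matrix of determinant `1` whose lower-left entry
is divisible by `N`. -/
def Gamma0Set (N : ℕ) : Set (Matrix (Fin 2) (Fin 2) ℚ)ˣ :=
  {A | ∃ m : Matrix (Fin 2) (Fin 2) ℤ, m.det = 1 ∧ (N : ℤ) ∣ m 1 0 ∧
    m.map (Int.cast : ℤ → ℚ) = (A : Matrix (Fin 2) (Fin 2) ℚ)}

/-- `x = [[1,1/2],[0,1]]` as a unit of `M₂(ℚ)`. -/
noncomputable def xUnit42 : (Matrix (Fin 2) (Fin 2) ℚ)ˣ :=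
  ⟨!![1, 1/2; 0, 1], !![1, -(1/2); 0, 1],
    by ext i j; fin_cases i <;> fin_cases j <;>
      simp [Matrix.mul_apply, Fin.sum_univ_two, Matrix.one_apply],
    by ext i j; fin_cases i <;> fin_cases j <;>
      simp [Matrix.mul_apply, Fin.sum_univ_two, Matrix.one_apply]⟩

/-- `y = [[1,0],[4,1]]` as a unit of `M₂(ℚ)`. -/
noncomputable def yUnit42 : (Matrix (Fin 2) (Fin 2) ℚ)ˣ :=
  ⟨!![1, 0; 4, 1], !![1, 0; -4, 1],
    by ext i j; fin_cases i <;> fin_cases j <;>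
      simp [Matrix.mul_apply, Fin.sum_univ_two, Matrix.one_apply],
    by ext i j; fin_cases i <;> fin_cases j <;>
      simp [Matrix.mul_apply, Fin.sum_univ_two, Matrix.one_apply]⟩

/-!
Every element of `Γ₀(4|2)` has the form `[[a, b/2], [4c, d]]` with integers `a, b, c, d` and
`ad - 2bc = 1`, so `a` and `d` are odd and `(b mod 2, c mod 2)` is a homomorphism onto
`C₂ × C₂`. Its kernel is exactly `Γ₀(8)`, and it sends `x` to `(1, 0)` and `y` to `(0, 1)`.
Since `C₂ × C₂` has exponent 2, the squares of `x`, `y` and `xy` lie in `Γ₀(8)`.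
-/

open Matrix

namespace Gamma0_4_2

def mat (a b c d : ℤ) : Matrix (Fin 2) (Fin 2) ℚ := !![a, b / 2; 4 * c, d]

theorem mat_mul (a b c d a' b' c' d' : ℤ) :
    mat a b c d * mat a' b' c' d' =
      mat (a * a' + 2 * b * c') (a * b' + b * d') (c * a' + d * c') (2 * c * b' + d * d') := by
  ext i j; fin_cases i <;> fin_cases j <;> simp [mat] <;> ring

theorem mat_one : mat 1 0 0 1 = 1 := by
  ext i j; fin_cases i <;> fin_cases j <;> simp [mat]

theorem mat_mul_adjugate {a b c d : ℤ} (h : a * d - 2 * b * c = 1) :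
    mat a b c d * mat d (-b) (-c) a = 1 := by
  rw [mat_mul, ← mat_one]
  congr 1 <;> first | linear_combination h | ring

theorem map_intCast_eq_mat_iff (m : Matrix (Fin 2) (Fin 2) ℤ) (a b c d : ℤ) :
    m.map (Int.cast : ℤ → ℚ) = mat a b c d ↔
      m 0 0 = a ∧ 2 * m 0 1 = b ∧ m 1 0 = 4 * c ∧ m 1 1 = d := by
  rw [← Matrix.ext_iff, Fin.forall_fin_two, Fin.forall_fin_two, Fin.forall_fin_two]
  simp only [mat, map_apply, of_apply, cons_val', cons_val_zero, cons_val_one, empty_val',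
    cons_val_fin_one]
  rw [eq_div_iff two_ne_zero, mul_comm _ (2 : ℚ)]
  norm_cast
  rw [and_assoc]

theorem odd_of_det_eq_one {a b c d : ℤ} (h : a * d - 2 * b * c = 1) : Odd a ∧ Odd d :=
  Int.odd_mul.mp ⟨b * c, by linear_combination h⟩

end Gamma0_4_2

open Gamma0_4_2 in
def Gamma0_4_2 : Subgroup (Matrix (Fin 2) (Fin 2) ℚ)ˣ where
  carrier := {A | ∃ a b c d : ℤ, a * d - 2 * b * c = 1 ∧ (A : Matrix (Fin 2) (Fin 2) ℚ) =
    mat a b c d}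
  one_mem' := ⟨1, 0, 0, 1, by norm_num, mat_one.symm⟩
  mul_mem' := by
    rintro A B ⟨a, b, c, d, h, hA⟩ ⟨a', b', c', d', h', hB⟩
    refine ⟨_, _, _, _, ?_, by rw [Units.val_mul, hA, hB, mat_mul]⟩
    linear_combination (a' * d' - 2 * b' * c') * h + h'
  inv_mem' := by
    rintro A ⟨a, b, c, d, h, hA⟩
    refine ⟨d, -b, -c, a, by linear_combination h, Units.inv_eq_of_mul_eq_one_right ?_⟩
    rw [hA, mat_mul_adjugate h]

namespace Gamma0_4_2

def kleinCoords (A : Matrix (Fin 2) (Fin 2) ℚ) :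
    Multiplicative (ZMod 2) × Multiplicative (ZMod 2) :=
  (.ofAdd ((2 * A 0 1).num : ZMod 2), .ofAdd ((A 1 0 / 4).num : ZMod 2))

theorem kleinCoords_mat (a b c d : ℤ) :
    kleinCoords (mat a b c d) = (.ofAdd (b : ZMod 2), .ofAdd (c : ZMod 2)) := by
  simp [kleinCoords, mat, mul_div_cancel₀]

def toKlein : Gamma0_4_2 →* Multiplicative (ZMod 2) × Multiplicative (ZMod 2) where
  toFun g := kleinCoords (g : (Matrix (Fin 2) (Fin 2) ℚ)ˣ)
  map_one' := by
    rw [OneMemClass.coe_one, Units.val_one, ← mat_one, kleinCoords_mat]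
    simp
  map_mul' := by
    rintro ⟨A, a, b, c, d, h, hA⟩ ⟨B, a', b', c', d', h', hB⟩
    -- the diagonal entries are odd, so `b` and `c` add up mod 2 under multiplication
    have ⟨ha, hd⟩ := odd_of_det_eq_one h
    have ⟨ha', hd'⟩ := odd_of_det_eq_one h'
    simp only [Subgroup.coe_mul, Units.val_mul, hA, hB, mat_mul, kleinCoords_mat]
    simp [ha.intCast_zmod_two, hd.intCast_zmod_two, ha'.intCast_zmod_two, hd'.intCast_zmod_two,
      mul_comm]

theorem mem_Gamma0Set_eight_iff {A : (Matrix (Fin 2) (Fin 2) ℚ)ˣ} {a b c d : ℤ}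
    (h : a * d - 2 * b * c = 1) (hA : (A : Matrix (Fin 2) (Fin 2) ℚ) = mat a b c d) :
    A ∈ Gamma0Set 8 ↔ 2 ∣ b ∧ 2 ∣ c := by
  simp only [Gamma0Set, Set.mem_ofPred_eq, hA, map_intCast_eq_mat_iff]
  constructor
  · rintro ⟨m, -, ⟨k, hk⟩, -, hb, hc, -⟩
    exact ⟨⟨m 0 1, hb.symm⟩, ⟨k, by omega⟩⟩
  · rintro ⟨⟨β, rfl⟩, ⟨γ, rfl⟩⟩
    refine ⟨!![a, β; 8 * γ, d], ?_, by simp, by simp, by simp, by simp; ring, by simp⟩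
    rw [det_fin_two_of]
    linear_combination h

theorem mem_Gamma0Set_eight_iff_toKlein_eq_one (g : Gamma0_4_2) :
    (g : (Matrix (Fin 2) (Fin 2) ℚ)ˣ) ∈ Gamma0Set 8 ↔ toKlein g = 1 := by
  obtain ⟨A, a, b, c, d, h, hA⟩ := g
  rw [mem_Gamma0Set_eight_iff h hA]
  simp [toKlein, hA, kleinCoords_mat, Prod.ext_iff, ZMod.intCast_zmod_eq_zero_iff_dvd]

theorem Gamma0Set_eight_subset : Gamma0Set 8 ⊆ Gamma0_4_2 := by
  rintro A ⟨m, hdet, ⟨k, hk⟩, hm⟩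
  refine ⟨m 0 0, 2 * m 0 1, 2 * k, m 1 1, ?_, ?_⟩
  · rw [det_fin_two] at hdet
    linear_combination hdet + m 0 1 * hk
  · rw [← hm, map_intCast_eq_mat_iff]
    exact ⟨rfl, rfl, by rw [hk]; ring, rfl⟩

theorem xUnit42_eq_mat : (xUnit42 : Matrix (Fin 2) (Fin 2) ℚ) = mat 1 1 0 1 := by
  simp [xUnit42, mat]

theorem yUnit42_eq_mat : (yUnit42 : Matrix (Fin 2) (Fin 2) ℚ) = mat 1 0 1 1 := by
  simp [yUnit42, mat]

theorem xUnit42_mem : xUnit42 ∈ Gamma0_4_2 := ⟨1, 1, 0, 1, by norm_num, xUnit42_eq_mat⟩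

theorem yUnit42_mem : yUnit42 ∈ Gamma0_4_2 := ⟨1, 0, 1, 1, by norm_num, yUnit42_eq_mat⟩

theorem toKlein_xUnit42 : toKlein ⟨xUnit42, xUnit42_mem⟩ = (.ofAdd 1, 1) := by
  simp [toKlein, xUnit42_eq_mat, kleinCoords_mat]

theorem toKlein_yUnit42 : toKlein ⟨yUnit42, yUnit42_mem⟩ = (1, .ofAdd 1) := by
  simp [toKlein, yUnit42_eq_mat, kleinCoords_mat]

end Gamma0_4_2

theorem MonoidHom.surjective_of_map_eq_ofAdd_one {G : Type*} [Monoid G] {n m : ℕ} [NeZero n]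
    [NeZero m] (f : G →* Multiplicative (ZMod n) × Multiplicative (ZMod m)) {g h : G}
    (hg : f g = (.ofAdd 1, 1)) (hh : f h = (1, .ofAdd 1)) : Function.Surjective f := by
  rintro ⟨s, t⟩
  refine ⟨g ^ (s.toAdd).val * h ^ (t.toAdd).val, ?_⟩
  simp [hg, hh, ← ofAdd_nsmul]

open Gamma0_4_2 in
/-- `Γ₀(4|2)/Γ₀(8) ≅ C₂ × C₂`: with `x = [[1,1/2],[0,1]]` and
`y = [[1,0],[4,1]]` one has `x², y², (xy)² ∈ Γ₀(8)` while `x, y, xy ∉ Γ₀(8)`,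
and there is a homomorphism from `⟨Γ₀(8), x, y⟩` onto the Klein four-group
`C₂ × C₂` whose kernel is exactly `Γ₀(8)` (so the quotient, generated by the
images of `x` and `y`, is isomorphic to `C₂ × C₂`). -/
theorem gamma0_4_2_mod_gamma0_8_klein_four :
    xUnit42 ^ 2 ∈ Gamma0Set 8 ∧ yUnit42 ^ 2 ∈ Gamma0Set 8 ∧
    (xUnit42 * yUnit42) ^ 2 ∈ Gamma0Set 8 ∧
    xUnit42 ∉ Gamma0Set 8 ∧ yUnit42 ∉ Gamma0Set 8 ∧ xUnit42 * yUnit42 ∉ Gamma0Set 8 ∧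
    ∃ φ : (Subgroup.closure (Gamma0Set 8 ∪ {xUnit42, yUnit42}) :
            Subgroup (Matrix (Fin 2) (Fin 2) ℚ)ˣ) →*
          Multiplicative (ZMod 2) × Multiplicative (ZMod 2),
      Function.Surjective φ ∧
      ∀ g, φ g = 1 ↔ (g : (Matrix (Fin 2) (Fin 2) ℚ)ˣ) ∈ Gamma0Set 8 := by
  set X : Gamma0_4_2 := ⟨xUnit42, xUnit42_mem⟩
  set Y : Gamma0_4_2 := ⟨yUnit42, yUnit42_mem⟩
  have sq_mem (g : Gamma0_4_2) : ((g ^ 2 : Gamma0_4_2) : (Matrix (Fin 2) (Fin 2) ℚ)ˣ) ∈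
      Gamma0Set 8 := by
    rw [mem_Gamma0Set_eight_iff_toKlein_eq_one, map_pow]
    generalize toKlein g = w
    revert w; decide
  have closure_le : Subgroup.closure (Gamma0Set 8 ∪ {xUnit42, yUnit42}) ≤ Gamma0_4_2 := by
    rw [Subgroup.closure_le, Set.union_subset_iff, Set.insert_subset_iff, Set.singleton_subset_iff]
    exact ⟨Gamma0Set_eight_subset, xUnit42_mem, yUnit42_mem⟩
  refine ⟨sq_mem X, sq_mem Y, sq_mem (X * Y),
    (mem_Gamma0Set_eight_iff_toKlein_eq_one X).not.2 (by rw [toKlein_xUnit42]; decide),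
    (mem_Gamma0Set_eight_iff_toKlein_eq_one Y).not.2 (by rw [toKlein_yUnit42]; decide),
    (mem_Gamma0Set_eight_iff_toKlein_eq_one (X * Y)).not.2
      (by rw [map_mul, toKlein_xUnit42, toKlein_yUnit42]; decide),
    toKlein.comp (Subgroup.inclusion closure_le), ?_,
    fun g ↦ (mem_Gamma0Set_eight_iff_toKlein_eq_one _).symm⟩
  exact MonoidHom.surjective_of_map_eq_ofAdd_one _
    (g := ⟨xUnit42, Subgroup.subset_closure (by simp)⟩) toKlein_xUnit42
    (h := ⟨yUnit42, Subgroup.subset_closure (by simp)⟩) toKlein_yUnit42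
end

section
/- Let x = [[1, 1/3],[0,1]] and y = [[1,0],[3,1]] in SL₂(ℚ). Then modulo Γ₀(9), x and y have order 3 in the quotient Γ₀(3|3)/Γ₀(9), and the quotient group Γ₀(3|3)/Γ₀(9) generated by the images of x and y is isomorphic to the alternating group A₄. -/
/-- `x = [[1,1/3],[0,1]]` as a unit of `M₂(ℚ)`. -/
noncomputable def xUnit33 : (Matrix (Fin 2) (Fin 2) ℚ)ˣ :=
  ⟨!![1, 1/3; 0, 1], !![1, -(1/3); 0, 1],
    by ext i j; fin_cases i <;> fin_cases j <;>
      simp [Matrix.mul_apply, Fin.sum_univ_two, Matrix.one_apply],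
    by ext i j; fin_cases i <;> fin_cases j <;>
      simp [Matrix.mul_apply, Fin.sum_univ_two, Matrix.one_apply]⟩

/-- `y = [[1,0],[3,1]]` as a unit of `M₂(ℚ)`. -/
noncomputable def yUnit33 : (Matrix (Fin 2) (Fin 2) ℚ)ˣ :=
  ⟨!![1, 0; 3, 1], !![1, 0; -3, 1],
    by ext i j; fin_cases i <;> fin_cases j <;>
      simp [Matrix.mul_apply, Fin.sum_univ_two, Matrix.one_apply],
    by ext i j; fin_cases i <;> fin_cases j <;>
      simp [Matrix.mul_apply, Fin.sum_univ_two, Matrix.one_apply]⟩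


open Matrix

abbrev F3 := ZMod 3
abbrev M2Z := Matrix (Fin 2) (Fin 2) ℤ
abbrev M2Q := Matrix (Fin 2) (Fin 2) ℚ
abbrev M2F := Matrix (Fin 2) (Fin 2) F3
abbrev GQ := (Matrix (Fin 2) (Fin 2) ℚ)ˣ

noncomputable def castM : M2Z →+* M2Q := (Int.castRingHom ℚ).mapMatrix
noncomputable def redM : M2Z →+* M2F := (Int.castRingHom F3).mapMatrix

lemma castM_apply (m : M2Z) (i j : Fin 2) : castM m i j = (m i j : ℚ) := rfl
lemma redM_apply (m : M2Z) (i j : Fin 2) : redM m i j = (m i j : F3) := rfl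

lemma castM_inj : Function.Injective castM := by
  intro m n h
  ext i j
  have h2 : castM m i j = castM n i j := by rw [h]
  rw [castM_apply, castM_apply] at h2
  exact_mod_cast h2

noncomputable def cU : GQ :=
  ⟨!![(3:ℚ),0;0,1], !![1/3,0;0,1],
    by ext i j; fin_cases i <;> fin_cases j <;>
      simp [Matrix.mul_apply, Fin.sum_univ_two, Matrix.one_apply] <;> norm_num,
    by ext i j; fin_cases i <;> fin_cases j <;>
      simp [Matrix.mul_apply, Fin.sum_univ_two, Matrix.one_apply] <;> norm_num⟩

lemma cU_val : (cU : M2Q) = !![(3:ℚ),0;0,1] := rfl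
lemma cU_inv_val : ((cU⁻¹ : GQ) : M2Q) = !![1/3,0;0,1] := rfl

noncomputable def SG : Subgroup GQ where
  carrier := {A | ∃ m : M2Z, m.det = 1 ∧ castM m = ((cU * A * cU⁻¹ : GQ) : M2Q)}
  one_mem' := ⟨1, by simp, by simp⟩
  mul_mem' := by
    rintro a b ⟨m, hm, hm2⟩ ⟨n, hn, hn2⟩
    refine ⟨m * n, by rw [det_mul, hm, hn, one_mul], ?_⟩
    rw [_root_.map_mul, hm2, hn2]
    have h : (cU * (a * b) * cU⁻¹ : GQ) = (cU * a * cU⁻¹) * (cU * b * cU⁻¹) := by group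
    rw [h]; rfl
  inv_mem' := by
    rintro a ⟨m, hm, hm2⟩
    refine ⟨m.adjugate, by rw [det_adjugate, hm, one_pow], ?_⟩
    have h1 : castM m.adjugate * ((cU * a * cU⁻¹ : GQ) : M2Q) = 1 := by
      rw [← hm2, ← _root_.map_mul, Matrix.adjugate_mul, hm]
      simp
    have h2 := Units.inv_eq_of_mul_eq_one_left h1
    have h3 : (cU * a⁻¹ * cU⁻¹ : GQ) = (cU * a * cU⁻¹)⁻¹ := by group
    rw [h3, ← h2]

lemma mem_SG {A : GQ} : A ∈ SG ↔
    ∃ m : M2Z, m.det = 1 ∧ castM m = ((cU * A * cU⁻¹ : GQ) : M2Q) := Iff.rfl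

noncomputable def wit {A : GQ} (h : A ∈ SG) : M2Z := (mem_SG.1 h).choose
lemma wit_det {A : GQ} (h : A ∈ SG) : (wit h).det = 1 := (mem_SG.1 h).choose_spec.1
lemma wit_spec {A : GQ} (h : A ∈ SG) :
    castM (wit h) = ((cU * A * cU⁻¹ : GQ) : M2Q) := (mem_SG.1 h).choose_spec.2
lemma wit_eq {A : GQ} (h : A ∈ SG) {m : M2Z}
    (hm : castM m = ((cU * A * cU⁻¹ : GQ) : M2Q)) : wit h = m :=
  castM_inj (by rw [wit_spec h, hm])

noncomputable def nuF : SG →* M2F where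
  toFun A := redM (wit A.2)
  map_one' := by
    show redM (wit (1 : SG).2) = 1
    have h : wit (1 : SG).2 = 1 := wit_eq _ (by simp)
    rw [h, _root_.map_one]
  map_mul' a b := by
    show redM (wit (a * b).2) = redM (wit a.2) * redM (wit b.2)
    have h : wit (a * b).2 = wit a.2 * wit b.2 := by
      refine wit_eq _ ?_
      rw [_root_.map_mul, wit_spec a.2, wit_spec b.2]
      have h2 : (cU * ↑(a * b) * cU⁻¹ : GQ) = (cU * ↑a * cU⁻¹) * (cU * ↑b * cU⁻¹) := by
        rw [Subgroup.coe_mul]; group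
      rw [h2]; rfl
    rw [h, _root_.map_mul]

lemma nu_det (A : SG) : (nuF A).det = 1 := by
  show (redM (wit A.2)).det = 1
  rw [show redM (wit A.2) = (Int.castRingHom F3).mapMatrix (wit A.2) from rfl,
    ← RingHom.map_det, wit_det]
  simp
-- continuation fragment (will be appended)
def rep : Fin 4 → (Fin 2 → F3)
| 0 => ![1,0] | 1 => ![0,1] | 2 => ![1,1] | 3 => ![1,2]

def cls (v : Fin 2 → F3) : Fin 4 :=
  if v 0 = 0 then 1
  else if v 0 = 1 then (if v 1 = 0 then 0 else if v 1 = 1 then 2 else 3)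
  else (if v 1 = 0 then 0 else if v 1 = 1 then 3 else 2)

def act (m : M2F) : Fin 4 → Fin 4 := fun i => cls (m.mulVec (rep i))

set_option maxRecDepth 100000 in
lemma act_one : act 1 = id := by decide

set_option maxRecDepth 1000000 in
lemma act_mul : ∀ m n : M2F, m.det = 1 → n.det = 1 → act (m * n) = act m ∘ act n := by decide

set_option maxRecDepth 1000000 in
lemma act_sign : ∀ m : M2F, m.det = 1 → ∀ e : Equiv.Perm (Fin 4), ⇑e = act m →
    Equiv.Perm.sign e = 1 := by decide

set_option maxRecDepth 1000000 in
lemma act_ker : ∀ m : M2F, m.det = 1 → (act m = id ↔ (m = 1 ∨ m = -1)) := by decide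

set_option maxRecDepth 1000000 in
lemma diag_pm : ∀ m : M2F, m.det = 1 → m 0 1 = 0 → m 1 0 = 0 → m = 1 ∨ m = -1 := by decide

def σT : Equiv.Perm (Fin 4) := ⟨![0,2,3,1], ![0,3,1,2], by decide, by decide⟩
def σL : Equiv.Perm (Fin 4) := ⟨![2,1,3,0], ![3,1,0,2], by decide, by decide⟩

set_option maxRecDepth 1000000 in
lemma σT_act : ⇑σT = act !![1,1;0,1] := by decide
set_option maxRecDepth 1000000 in
lemma σL_act : ⇑σL = act !![1,0;1,1] := by decide

set_option maxRecDepth 1000000 in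
lemma words : ∀ g : Equiv.Perm (Fin 4), Equiv.Perm.sign g = 1 →
    ∃ e : Fin 3 × Fin 3 × Fin 3,
      g = σT ^ (e.1 : ℕ) * σL ^ (e.2.1 : ℕ) * σT ^ (e.2.2 : ℕ) := by decide

noncomputable def permOf (A : SG) : Equiv.Perm (Fin 4) where
  toFun := act (nuF A)
  invFun := act (nuF A⁻¹)
  left_inv i := by
    have h := congrFun (act_mul (nuF A⁻¹) (nuF A) (nu_det _) (nu_det _)).symm
      i
    simp only [Function.comp_apply] at h
    rw [h, ← _root_.map_mul, inv_mul_cancel, _root_.map_one, act_one, id]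
  right_inv i := by
    have h := congrFun (act_mul (nuF A) (nuF A⁻¹) (nu_det _) (nu_det _)).symm i
    simp only [Function.comp_apply] at h
    rw [h, ← _root_.map_mul, mul_inv_cancel, _root_.map_one, act_one, id]

lemma permOf_coe (A : SG) : ⇑(permOf A) = act (nuF A) := rfl

noncomputable def PhiS : SG →* Equiv.Perm (Fin 4) where
  toFun := permOf
  map_one' := by
    apply Equiv.ext; intro i
    rw [Equiv.Perm.one_apply, permOf_coe, _root_.map_one, act_one, id]
  map_mul' a b := by
    apply Equiv.ext; intro i
    rw [Equiv.Perm.mul_apply, permOf_coe, permOf_coe, permOf_coe,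
      _root_.map_mul, act_mul _ _ (nu_det _) (nu_det _), Function.comp_apply]

noncomputable def phiS : SG →* alternatingGroup (Fin 4) :=
  MonoidHom.codRestrict PhiS _ fun A =>
    Equiv.Perm.mem_alternatingGroup.2 (act_sign (nuF A) (nu_det A) _ rfl)

lemma phiS_coe (A : SG) : (phiS A : Equiv.Perm (Fin 4)) = permOf A := rfl

lemma castM_eq (m : M2Z) : castM m = m.map (Int.cast : ℤ → ℚ) := rfl

lemma xval : (xUnit33 : M2Q) = !![1, 1/3; 0, 1] := rfl
lemma yval : (yUnit33 : M2Q) = !![1, 0; 3, 1] := rfl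

lemma coe_conj (A : GQ) :
    ((cU * A * cU⁻¹ : GQ) : M2Q) = !![(3:ℚ),0;0,1] * (A : M2Q) * !![1/3,0;0,1] := rfl

lemma conj_entries (M : M2Q) :
    !![(3:ℚ),0;0,1] * M * !![1/3,0;0,1] = !![M 0 0, 3 * M 0 1; M 1 0 / 3, M 1 1] := by
  ext i j
  fin_cases i <;> fin_cases j <;>
    rw [Matrix.mul_apply, Fin.sum_univ_two] <;>
    simp [Matrix.mul_apply, Fin.sum_univ_two] <;> ring

lemma conj_inv_entries (M : M2Q) :
    !![(1/3:ℚ),0;0,1] * M * !![3,0;0,1] = !![M 0 0, M 0 1 / 3; 3 * M 1 0, M 1 1] := by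
  ext i j
  fin_cases i <;> fin_cases j <;>
    rw [Matrix.mul_apply, Fin.sum_univ_two] <;>
    simp [Matrix.mul_apply, Fin.sum_univ_two] <;> ring

lemma gamma0_wit {A : GQ} (m : M2Z) (k : ℤ) (hk : m 1 0 = 9 * k)
    (hmap : m.map (Int.cast : ℤ → ℚ) = (A : M2Q)) :
    castM !![m 0 0, 3 * m 0 1; 3 * k, m 1 1] = ((cU * A * cU⁻¹ : GQ) : M2Q) := by
  rw [coe_conj, ← hmap, conj_entries]
  ext i j
  fin_cases i <;> fin_cases j <;>
    simp [castM_apply, Matrix.map_apply, hk] <;> push_cast <;> ring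

lemma gamma0_det {m : M2Z} (k : ℤ) (hk : m 1 0 = 9 * k) (hdet : m.det = 1) :
    (!![m 0 0, 3 * m 0 1; 3 * k, m 1 1] : M2Z).det = 1 := by
  rw [Matrix.det_fin_two_of]
  rw [Matrix.det_fin_two, hk] at hdet
  linear_combination hdet

lemma gamma0_mem_SG {A : GQ} (h : A ∈ Gamma0Set 9) : A ∈ SG := by
  obtain ⟨m, hdet, ⟨k, hk⟩, hmap⟩ := h
  exact ⟨_, gamma0_det k hk hdet, gamma0_wit m k hk hmap⟩

lemma x_wit : castM !![1, 1; 0, 1] = ((cU * xUnit33 * cU⁻¹ : GQ) : M2Q) := by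
  rw [coe_conj, xval, conj_entries]
  ext i j
  fin_cases i <;> fin_cases j <;> norm_num [castM_apply]

lemma y_wit : castM !![1, 0; 1, 1] = ((cU * yUnit33 * cU⁻¹ : GQ) : M2Q) := by
  rw [coe_conj, yval, conj_entries]
  ext i j
  fin_cases i <;> fin_cases j <;> norm_num [castM_apply]

lemma x_mem_SG : xUnit33 ∈ SG :=
  ⟨!![1, 1; 0, 1], by simp [Matrix.det_fin_two_of], x_wit⟩

lemma y_mem_SG : yUnit33 ∈ SG :=
  ⟨!![1, 0; 1, 1], by simp [Matrix.det_fin_two_of], y_wit⟩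

abbrev KG : Subgroup GQ := Subgroup.closure (Gamma0Set 9 ∪ {xUnit33, yUnit33})

lemma hKS : KG ≤ SG := by
  rw [Subgroup.closure_le]
  rintro A (h | h)
  · exact gamma0_mem_SG h
  · simp only [Set.mem_insert_iff, Set.mem_singleton_iff] at h
    rcases h with rfl | rfl
    · exact x_mem_SG
    · exact y_mem_SG

noncomputable def φK : KG →* alternatingGroup (Fin 4) := phiS.comp (Subgroup.inclusion hKS)

lemma nu_eq_of (A : SG) {m : M2Z} (hm : castM m = ((cU * (A : GQ) * cU⁻¹ : GQ) : M2Q)) :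
    nuF A = redM m := by
  show redM (wit A.2) = redM m
  rw [wit_eq A.2 hm]

lemma phiK_coe (g : KG) :
    ((φK g : alternatingGroup (Fin 4)) : Equiv.Perm (Fin 4)) =
      permOf (Subgroup.inclusion hKS g) := rfl

noncomputable def xK : KG := ⟨xUnit33, Subgroup.subset_closure (Or.inr (Set.mem_insert _ _))⟩
noncomputable def yK : KG :=
  ⟨yUnit33, Subgroup.subset_closure (Or.inr (Set.mem_insert_of_mem _ rfl))⟩

lemma redTT : redM !![1, 1; 0, 1] = (!![1, 1; 0, 1] : M2F) := by
  ext i j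
  fin_cases i <;> fin_cases j <;> simp [redM_apply]

lemma redLL : redM !![1, 0; 1, 1] = (!![1, 0; 1, 1] : M2F) := by
  ext i j
  fin_cases i <;> fin_cases j <;> simp [redM_apply]

lemma incl_x : ((Subgroup.inclusion hKS xK : SG) : GQ) = xUnit33 := rfl
lemma incl_y : ((Subgroup.inclusion hKS yK : SG) : GQ) = yUnit33 := rfl

lemma phiK_x : ((φK xK : alternatingGroup (Fin 4)) : Equiv.Perm (Fin 4)) = σT := by
  rw [phiK_coe]
  apply Equiv.coe_fn_injective
  show ⇑(permOf (Subgroup.inclusion hKS xK)) = ⇑σT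
  rw [permOf_coe, σT_act]
  congr 1
  have hx : castM !![1, 1; 0, 1] =
      ((cU * ((Subgroup.inclusion hKS xK : SG) : GQ) * cU⁻¹ : GQ) : M2Q) := by
    rw [incl_x]; exact x_wit
  rw [(nu_eq_of _ hx).trans redTT]

lemma phiK_y : ((φK yK : alternatingGroup (Fin 4)) : Equiv.Perm (Fin 4)) = σL := by
  rw [phiK_coe]
  apply Equiv.coe_fn_injective
  show ⇑(permOf (Subgroup.inclusion hKS yK)) = ⇑σL
  rw [permOf_coe, σL_act]
  congr 1
  have hy : castM !![1, 0; 1, 1] =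
      ((cU * ((Subgroup.inclusion hKS yK : SG) : GQ) * cU⁻¹ : GQ) : M2Q) := by
    rw [incl_y]; exact y_wit
  rw [(nu_eq_of _ hy).trans redLL]

lemma phiK_surj : Function.Surjective φK := by
  intro g
  obtain ⟨⟨e1, e2, e3⟩, he⟩ := words g.1 (Equiv.Perm.mem_alternatingGroup.1 g.2)
  refine ⟨xK ^ (e1 : ℕ) * yK ^ (e2 : ℕ) * xK ^ (e3 : ℕ), ?_⟩
  apply Subtype.ext
  rw [_root_.map_mul, _root_.map_mul, map_pow, map_pow, map_pow]
  simp only [Subgroup.coe_mul, SubgroupClass.coe_pow, phiK_x, phiK_y]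
  exact he.symm

lemma phiK_eq_one_iff (g : KG) :
    φK g = 1 ↔ act (nuF (Subgroup.inclusion hKS g)) = id := by
  rw [Subtype.ext_iff]
  have h1 : ((φK g : alternatingGroup (Fin 4)) : Equiv.Perm (Fin 4)) =
      permOf (Subgroup.inclusion hKS g) := rfl
  rw [h1, OneMemClass.coe_one]
  constructor
  · intro h
    have h2 : ⇑(permOf (Subgroup.inclusion hKS g)) = ⇑(1 : Equiv.Perm (Fin 4)) := by rw [h]
    rw [permOf_coe, Equiv.Perm.coe_one] at h2
    exact h2
  · intro h
    apply Equiv.coe_fn_injective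
    show ⇑(permOf (Subgroup.inclusion hKS g)) = ⇑(1 : Equiv.Perm (Fin 4))
    rw [permOf_coe, Equiv.Perm.coe_one, h]

lemma three_f3 : ((3 : ℤ) : F3) = 0 := by decide

lemma phiK_ker (g : KG) : φK g = 1 ↔ (g : GQ) ∈ Gamma0Set 9 := by
  set gS : SG := Subgroup.inclusion hKS g with hgS
  rw [phiK_eq_one_iff]
  constructor
  · intro h
    have hpm := (act_ker (nuF gS) (nu_det gS)).1 h
    set W : M2Z := wit gS.2 with hW
    have hnu : nuF gS = redM W := rfl
    have h01 : ((W 0 1 : ℤ) : F3) = 0 := by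
      rcases hpm with hp | hp <;> rw [hnu] at hp <;>
        · have := congrArg (fun M : M2F => M 0 1) hp
          simpa [redM_apply, Matrix.one_apply] using this
    have h10 : ((W 1 0 : ℤ) : F3) = 0 := by
      rcases hpm with hp | hp <;> rw [hnu] at hp <;>
        · have := congrArg (fun M : M2F => M 1 0) hp
          simpa [redM_apply, Matrix.one_apply] using this
    obtain ⟨b, hb⟩ := (ZMod.intCast_zmod_eq_zero_iff_dvd _ 3).1 h01
    obtain ⟨c, hc⟩ := (ZMod.intCast_zmod_eq_zero_iff_dvd _ 3).1 h10
    have hdetW : W.det = 1 := wit_det gS.2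
    have hgval : ((cU⁻¹ : GQ) : M2Q) * castM W * (cU : M2Q) = ((g : GQ) : M2Q) := by
      have h2 : (cU⁻¹ * (cU * (g : GQ) * cU⁻¹) * cU : GQ) = (g : GQ) := by group
      calc ((cU⁻¹ : GQ) : M2Q) * castM W * (cU : M2Q)
          = ((cU⁻¹ * (cU * (g : GQ) * cU⁻¹) * cU : GQ) : M2Q) := by
            rw [wit_spec gS.2]; rfl
        _ = ((g : GQ) : M2Q) := by rw [h2]
    push_cast at hb hc
    refine ⟨!![W 0 0, b; 9 * c, W 1 1], ?_, ⟨c, by simp⟩, ?_⟩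
    · rw [Matrix.det_fin_two_of]
      rw [Matrix.det_fin_two, hb, hc] at hdetW
      linear_combination hdetW
    · rw [← hgval, cU_val, cU_inv_val, conj_inv_entries]
      ext i j
      fin_cases i <;> fin_cases j <;>
        simp [castM_apply, Matrix.map_apply, hb, hc] <;> push_cast <;> ring
  · rintro ⟨m, hdet, ⟨k, hk⟩, hmap⟩
    have hnu : nuF gS = redM !![m 0 0, 3 * m 0 1; 3 * k, m 1 1] :=
      nu_eq_of _ (gamma0_wit m k hk hmap)
    apply (act_ker (nuF gS) (nu_det gS)).2
    apply diag_pm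
    · exact nu_det gS
    · rw [hnu, redM_apply]
      simp [Int.cast_mul]
      exact Or.inl (by decide)
    · rw [hnu, redM_apply]
      simp [Int.cast_mul]
      exact Or.inl (by decide)

/-- `Γ₀(3|3)/Γ₀(9) ≅ A₄`: the images of `x = [[1,1/3],[0,1]]` and
`y = [[1,0],[3,1]]` have order `3` modulo `Γ₀(9)` (`x³, y³ ∈ Γ₀(9)`,
`x, y ∉ Γ₀(9)`), and there is a homomorphism from
`Γ₀(3|3) = ⟨Γ₀(9), x, y⟩` onto the alternating group `A₄` whose kernel is
exactly `Γ₀(9)`, so the quotient is isomorphic to `A₄`. -/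
theorem gamma0_3_3_mod_gamma0_9_A4 :
    xUnit33 ^ 3 ∈ Gamma0Set 9 ∧ xUnit33 ∉ Gamma0Set 9 ∧
    yUnit33 ^ 3 ∈ Gamma0Set 9 ∧ yUnit33 ∉ Gamma0Set 9 ∧
    ∃ φ : (Subgroup.closure (Gamma0Set 9 ∪ {xUnit33, yUnit33}) :
            Subgroup (Matrix (Fin 2) (Fin 2) ℚ)ˣ) →* alternatingGroup (Fin 4),
      Function.Surjective φ ∧
      ∀ g, φ g = 1 ↔ (g : (Matrix (Fin 2) (Fin 2) ℚ)ˣ) ∈ Gamma0Set 9 := by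
  refine ⟨?_, ?_, ?_, ?_, φK, phiK_surj, phiK_ker⟩
  · refine ⟨!![1, 1; 0, 1], by simp [Matrix.det_fin_two_of], ⟨0, by simp⟩, ?_⟩
    have h : ((xUnit33 ^ 3 : GQ) : M2Q) = (xUnit33 : M2Q) ^ 3 := rfl
    rw [h, xval]
    ext i j
    fin_cases i <;> fin_cases j <;>
      norm_num [pow_succ, Matrix.mul_apply, Fin.sum_univ_two, Matrix.map_apply]
  · rintro ⟨m, hdet, hdvd, hmap⟩
    have h1 : ((m 0 1 : ℤ) : ℚ) = 1/3 := by
      have := congrArg (fun M : M2Q => M 0 1) hmap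
      simpa [Matrix.map_apply, xval] using this
    have h2 : (3 * m 0 1 : ℤ) = 1 := by
      have : ((3 * m 0 1 : ℤ) : ℚ) = 1 := by push_cast; rw [h1]; ring
      exact_mod_cast this
    omega
  · refine ⟨!![1, 0; 9, 1], by simp [Matrix.det_fin_two_of], ⟨1, by simp⟩, ?_⟩
    have h : ((yUnit33 ^ 3 : GQ) : M2Q) = (yUnit33 : M2Q) ^ 3 := rfl
    rw [h, yval]
    ext i j
    fin_cases i <;> fin_cases j <;>
      norm_num [pow_succ, Matrix.mul_apply, Fin.sum_univ_two, Matrix.map_apply]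
  · rintro ⟨m, hdet, hdvd, hmap⟩
    have h1 : ((m 1 0 : ℤ) : ℚ) = 3 := by
      have := congrArg (fun M : M2Q => M 1 0) hmap
      simpa [Matrix.map_apply, yval] using this
    have h2 : (m 1 0 : ℤ) = 3 := by exact_mod_cast h1
    rw [h2] at hdvd
    omega
end

section
/- For M ∈ ℚ₊ and a fraction g/h in lowest terms (0 ≤ g < h, gcd(g,h) = 1), let g' be the inverse of g modulo h. Then the matrices α = [[M, g/h],[0,1]] and β = [[1, 0],[g'/h, 1/(M·h²)]] determine the same coset in PSL₂(ℤ)\PGL₂⁺(ℚ): there exists γ ∈ SL₂(ℤ) and λ ∈ ℚ₊ with α = λ·γ·β. -/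
/-! With `g g' = 1 + h k`, the integer matrix `γ = [[-k, g], [-g', h]]` has determinant `1`, and
`γ β = [[1/h, g/(M h²)], [0, 1/(M h)]]`, which is `α / (M h)`. -/

theorem Matrix.map_fin_two_of {α β : Type*} (f : α → β) (a b c d : α) :
    (!![a, b; c, d]).map f = !![f a, f b; f c, f d] :=
  Matrix.eta_fin_two _

theorem Matrix.upperTriangular_eq_smul_mul_lowerTriangular {K : Type*} [Field K]
    {M h g g' k : K} (hM : M ≠ 0) (hh : h ≠ 0) (hdet : g * g' - h * k = 1) :
    !![M, g / h; 0, 1] = (M * h) • (!![-k, g; -g', h] * !![1, 0; g' / h, 1 / (M * h ^ 2)]) := by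
  rw [Matrix.mul_fin_two, Matrix.smul_of]
  ext i j
  fin_cases i <;> fin_cases j <;> simp [mul_div_cancel₀ _ hh]
  · field_simp
    linear_combination -hdet
  all_goals field_simp

theorem standard_form_eq_reverse_standard_form_general (M : ℚ) (hM : 0 < M)
    (g h g' : ℕ) (hh : 0 < h)
    (hg' : g * g' ≡ 1 [MOD h]) :
    ∃ γ : Matrix (Fin 2) (Fin 2) ℤ, γ.det = 1 ∧ ∃ lam : ℚ, 0 < lam ∧
      !![M, (g : ℚ) / h; 0, 1] =
        lam • (γ.map (Int.cast : ℤ → ℚ) *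
          !![1, 0; (g' : ℚ) / h, 1 / (M * (h : ℚ) ^ 2)]) := by
  obtain ⟨k, hk⟩ : (h : ℤ) ∣ g * g' - 1 := by simpa using Nat.modEq_iff_dvd.mp hg'.symm
  have hdet : (g : ℤ) * g' - h * k = 1 := by rw [← hk]; ring
  refine ⟨!![-k, g; -(g' : ℤ), h], by rw [Matrix.det_fin_two_of]; linear_combination hdet, M * h,
    by positivity, ?_⟩
  rw [Matrix.map_fin_two_of]
  push_cast
  exact Matrix.upperTriangular_eq_smul_mul_lowerTriangular hM.ne' (by positivity)
    (by exact_mod_cast hdet)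

/-- Equivalence of the standard form `M, g/h` and the reverse standard form
`(1/(h²M), g'/h)`: if `g' · g ≡ 1 (mod h)`, then the matrices
`α = [[M, g/h],[0,1]]` and `β = [[1,0],[g'/h, 1/(Mh²)]]` determine the same
coset in `PSL₂(ℤ)\PGL₂⁺(ℚ)`, i.e. `α = λ·γ·β` for some `γ ∈ SL₂(ℤ)` and
`λ ∈ ℚ₊`. -/
theorem standard_form_eq_reverse_standard_form (M : ℚ) (hM : 0 < M)
    (g h g' : ℕ) (hh : 0 < h) (hg : g < h) (hgh : Nat.gcd g h = 1)
    (hg' : g * g' ≡ 1 [MOD h]) :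
    ∃ γ : Matrix (Fin 2) (Fin 2) ℤ, γ.det = 1 ∧ ∃ lam : ℚ, 0 < lam ∧
      !![M, (g : ℚ) / h; 0, 1] =
        lam • (γ.map (Int.cast : ℤ → ℚ) *
          !![1, 0; (g' : ℚ) / h, 1 / (M * (h : ℚ) ^ 2)]) :=
  standard_form_eq_reverse_standard_form_general M hM g h g' hh hg'
end

section
/- Hyper-distance is invariant under the right action of PGL₂⁺(ℚ): if g ∈ GL₂⁺(ℚ) and X', Y' are classes with α_X·g ∈ ℚ₊·SL₂(ℤ)·α_{X'} and α_Y·g ∈ ℚ₊·SL₂(ℤ)·α_{Y'}, then δ(X,Y) = δ(X',Y'). -/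
private lemma mapmul (m n : Matrix (Fin 2) (Fin 2) ℤ) :
    (m * n).map (Int.cast : ℤ → ℚ) = m.map Int.cast * n.map Int.cast := by
  ext i j
  simp only [Matrix.map_apply, Matrix.mul_apply]
  push_cast
  rfl

private lemma mapone : ((1 : Matrix (Fin 2) (Fin 2) ℤ).map (Int.cast : ℤ → ℚ)) = 1 := by
  ext i j
  simp [Matrix.map_apply, Matrix.one_apply]

private lemma mapdet (m : Matrix (Fin 2) (Fin 2) ℤ) :
    (m.map (Int.cast : ℤ → ℚ)).det = (m.det : ℚ) := by
  simp [Matrix.det_fin_two, Matrix.map_apply]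

private lemma mapadj (m : Matrix (Fin 2) (Fin 2) ℤ) (hm : m.det = 1) :
    (m.adjugate.map (Int.cast : ℤ → ℚ)) * m.map (Int.cast : ℤ → ℚ) = 1 := by
  rw [← mapmul, Matrix.adjugate_mul, hm, one_smul, mapone]

private lemma mapadj' (m : Matrix (Fin 2) (Fin 2) ℤ) (hm : m.det = 1) :
    m.map (Int.cast : ℤ → ℚ) * (m.adjugate.map (Int.cast : ℤ → ℚ)) = 1 := by
  rw [← mapmul, Matrix.mul_adjugate, hm, one_smul, mapone]

/-- Invariance of the hyper-distance under the right action of `PGL₂⁺(ℚ)`: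
if `α_X·g ∈ ℚ₊·SL₂(ℤ)·α_{X'}` and `α_Y·g ∈ ℚ₊·SL₂(ℤ)·α_{Y'}` for some
`g ∈ GL₂⁺(ℚ)`, then `δ(X,Y) = δ(X',Y')`, where `δ` is computed via the least
positive rational scaling making the quotient matrix integral. -/
theorem hyperdistance_right_invariant
    (M₁ M₂ M₁' M₂' q₁ q₂ q₁' q₂' : ℚ)
    (hM₁ : 0 < M₁) (hM₂ : 0 < M₂) (hM₁' : 0 < M₁') (hM₂' : 0 < M₂')
    (g : Matrix (Fin 2) (Fin 2) ℚ) (hg : 0 < g.det)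
    (hX : ∃ c : ℚ, 0 < c ∧ ∃ γ : Matrix (Fin 2) (Fin 2) ℤ, γ.det = 1 ∧
      !![M₁, q₁; 0, 1] * g = c • (γ.map (Int.cast : ℤ → ℚ) * !![M₁', q₁'; 0, 1]))
    (hY : ∃ c : ℚ, 0 < c ∧ ∃ γ : Matrix (Fin 2) (Fin 2) ℤ, γ.det = 1 ∧
      !![M₂, q₂; 0, 1] * g = c • (γ.map (Int.cast : ℤ → ℚ) * !![M₂', q₂'; 0, 1]))
    (a a' : ℚ)
    (ha : IsLeast {r : ℚ | 0 < r ∧ ∃ m : Matrix (Fin 2) (Fin 2) ℤ,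
      m.map (Int.cast : ℤ → ℚ) = r • (!![M₁, q₁; 0, 1] * (!![M₂, q₂; 0, 1])⁻¹)} a)
    (ha' : IsLeast {r : ℚ | 0 < r ∧ ∃ m : Matrix (Fin 2) (Fin 2) ℤ,
      m.map (Int.cast : ℤ → ℚ) = r • (!![M₁', q₁'; 0, 1] * (!![M₂', q₂'; 0, 1])⁻¹)} a') :
    (a • (!![M₁, q₁; 0, 1] * (!![M₂, q₂; 0, 1])⁻¹)).det =
      (a' • (!![M₁', q₁'; 0, 1] * (!![M₂', q₂'; 0, 1])⁻¹)).det := by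
  obtain ⟨c₁, hc₁, γ₁, hγ₁, hXe⟩ := hX
  obtain ⟨c₂, hc₂, γ₂, hγ₂, hYe⟩ := hY
  set α : Matrix (Fin 2) (Fin 2) ℚ := !![M₁, q₁; 0, 1] with hα
  set β : Matrix (Fin 2) (Fin 2) ℚ := !![M₂, q₂; 0, 1] with hβ
  set α' : Matrix (Fin 2) (Fin 2) ℚ := !![M₁', q₁'; 0, 1] with hα'
  set β' : Matrix (Fin 2) (Fin 2) ℚ := !![M₂', q₂'; 0, 1] with hβ'
  set G₁ := γ₁.map (Int.cast : ℤ → ℚ) with hG₁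
  set G₂ := γ₂.map (Int.cast : ℤ → ℚ) with hG₂
  set A := α * β⁻¹ with hA
  set A' := α' * β'⁻¹ with hA'
  have hαdet : α.det = M₁ := by rw [hα, Matrix.det_fin_two_of]; ring
  have hβdet : β.det = M₂ := by rw [hβ, Matrix.det_fin_two_of]; ring
  have hα'det : α'.det = M₁' := by rw [hα', Matrix.det_fin_two_of]; ring
  have hβ'det : β'.det = M₂' := by rw [hβ', Matrix.det_fin_two_of]; ring
  have hβu : IsUnit β.det := by rw [hβdet]; exact isUnit_iff_ne_zero.mpr hM₂.ne'
  have hβ'u : IsUnit β'.det := by rw [hβ'det]; exact isUnit_iff_ne_zero.mpr hM₂'.ne'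
  have hAβ : A * β = α := by
    rw [hA, Matrix.mul_assoc, Matrix.nonsing_inv_mul β hβu, Matrix.mul_one]
  have hA'β' : A' * β' = α' := by
    rw [hA', Matrix.mul_assoc, Matrix.nonsing_inv_mul β' hβ'u, Matrix.mul_one]
  have hadj1 : (γ₁.adjugate.map (Int.cast : ℤ → ℚ)) * G₁ = 1 := by
    rw [hG₁]; exact mapadj γ₁ hγ₁
  have hadj2 : G₂ * (γ₂.adjugate.map (Int.cast : ℤ → ℚ)) = 1 := by
    rw [hG₂]; exact mapadj' γ₂ hγ₂
  have hG1det : G₁.det = 1 := by rw [hG₁, mapdet, hγ₁]; norm_num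
  have hG2det : G₂.det = 1 := by rw [hG₂, mapdet, hγ₂]; norm_num
  clear_value A A' G₁ G₂
  have hcancel : ∀ P Q : Matrix (Fin 2) (Fin 2) ℚ, P * β' = Q * β' → P = Q := by
    intro P Q h
    have h2 := congrArg (fun M => M * β'⁻¹) h
    simpa [Matrix.mul_assoc, Matrix.mul_nonsing_inv β' hβ'u] using h2
  have h1 : (c₂ • (A * G₂)) * β' = α * g := by
    rw [Matrix.smul_mul, Matrix.mul_assoc, ← Matrix.mul_smul, ← hYe, ← Matrix.mul_assoc, hAβ]
  have h2 : (c₁ • (G₁ * A')) * β' = α * g := by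
    rw [Matrix.smul_mul, Matrix.mul_assoc, hA'β', hXe]
  have key : c₂ • (A * G₂) = c₁ • (G₁ * A') := hcancel _ _ (h1.trans h2.symm)
  set k := c₁ / c₂ with hk
  have hkpos : 0 < k := div_pos hc₁ hc₂
  have keyE : A * G₂ = k • (G₁ * A') := by
    have h3 := congrArg (fun M => c₂⁻¹ • M) key
    simpa [smul_smul, inv_mul_cancel₀ hc₂.ne', hk, div_eq_inv_mul, mul_comm] using h3
  have hiff : ∀ r : ℚ, (∃ m : Matrix (Fin 2) (Fin 2) ℤ, m.map (Int.cast : ℤ → ℚ) = r • A) ↔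
      (∃ m : Matrix (Fin 2) (Fin 2) ℤ, m.map (Int.cast : ℤ → ℚ) = (r * k) • A') := by
    intro r
    constructor
    · rintro ⟨m, hm⟩
      refine ⟨γ₁.adjugate * (m * γ₂), ?_⟩
      rw [mapmul, mapmul, hm, ← hG₂, Matrix.smul_mul, keyE, smul_smul,
        Matrix.mul_smul, ← Matrix.mul_assoc, hadj1, Matrix.one_mul]
    · rintro ⟨m, hm⟩
      have h4 : G₁ * ((r * k) • A') = r • (A * G₂) := by
        rw [Matrix.mul_smul, keyE, smul_smul]
      refine ⟨γ₁ * m * γ₂.adjugate, ?_⟩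
      rw [mapmul, mapmul, hm, ← hG₁, h4, Matrix.smul_mul, Matrix.mul_assoc, hadj2,
        Matrix.mul_one]
  have hle : IsLeast {r : ℚ | 0 < r ∧ ∃ m : Matrix (Fin 2) (Fin 2) ℤ,
      m.map (Int.cast : ℤ → ℚ) = r • A'} (a * k) := by
    constructor
    · exact ⟨mul_pos ha.1.1 hkpos, (hiff a).1 ha.1.2⟩
    · rintro r ⟨hr, m, hm⟩
      have hmem : r / k ∈ {r : ℚ | 0 < r ∧ ∃ m : Matrix (Fin 2) (Fin 2) ℤ,
          m.map (Int.cast : ℤ → ℚ) = r • A} := by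
        refine ⟨div_pos hr hkpos, (hiff (r / k)).2 ?_⟩
        rw [div_mul_cancel₀ _ hkpos.ne']
        exact ⟨m, hm⟩
      have h5 := ha.2 hmem
      calc a * k ≤ (r / k) * k := mul_le_mul_of_nonneg_right h5 hkpos.le
        _ = r := div_mul_cancel₀ _ hkpos.ne'
  have ha'eq : a' = a * k := le_antisymm (ha'.2 hle.1) (hle.2 ha'.1)
  have hkey : A.det * G₂.det = k ^ 2 * (G₁.det * A'.det) := by
    have h6 := congrArg Matrix.det keyE
    rw [Matrix.det_mul, Matrix.det_smul, Matrix.det_mul] at h6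
    simpa [Fintype.card_fin] using h6
  have hdetA : A.det = k ^ 2 * A'.det := by
    rw [hG2det, hG1det] at hkey
    simpa using hkey
  show (a • A).det = (a' • A').det
  rw [Matrix.det_smul, Matrix.det_smul, ha'eq, hdetA]
  norm_num [Fintype.card_fin]
  ring
end

section
/- For M ∈ ℕ₊, gcd(g,h)=1, 0 ≤ g < h, the hyper-distance between the number class h·M (matrix [[hM, 0],[0,1]]) and the number-like class M·(g/h) (matrix [[M, g/h],[0,1]]) equals h: the smallest positive rational a making a·[[hM,0],[0,1]]·[[M, g/h],[0,1]]⁻¹ integral is a = 1, and the determinant of the resulting matrix is h. -/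
/-- The hyper-distance between the number class `h·M` and the number-like
class `M·(g/h)` equals `h`: the smallest positive rational `a` making
`a·[[hM,0],[0,1]]·[[M,g/h],[0,1]]⁻¹` integral is `a = 1`, and the determinant
of the resulting matrix is `h`. -/
theorem hyperdistance_center_root (M g h : ℕ) (hM : 0 < M) (hh : 0 < h)
    (hg : g < h) (hgh : Nat.gcd g h = 1) :
    IsLeast {r : ℚ | 0 < r ∧ ∃ m : Matrix (Fin 2) (Fin 2) ℤ,
        m.map (Int.cast : ℤ → ℚ) =
          r • (!![(h : ℚ) * M, 0; 0, 1] * (!![(M : ℚ), (g : ℚ) / h; 0, 1])⁻¹)} 1 ∧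
    ((1 : ℚ) • (!![(h : ℚ) * M, 0; 0, 1] * (!![(M : ℚ), (g : ℚ) / h; 0, 1])⁻¹)).det
      = (h : ℚ) := by
  have hM' : (M : ℚ) ≠ 0 := Nat.cast_ne_zero.mpr hM.ne'
  have hh' : (h : ℚ) ≠ 0 := Nat.cast_ne_zero.mpr hh.ne'
  have hdet : (!![(M : ℚ), (g : ℚ) / h; 0, 1]).det = M := by
    simp [Matrix.det_fin_two_of]
  have hinv : (!![(M : ℚ), (g : ℚ) / h; 0, 1])⁻¹
      = !![(M : ℚ)⁻¹, -((g : ℚ) / h) * (M : ℚ)⁻¹; 0, 1] := by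
    rw [Matrix.inv_def, hdet, Matrix.adjugate_fin_two_of, Ring.inverse_eq_inv']
    ext i j
    fin_cases i <;> fin_cases j <;>
      simp [Matrix.smul_apply, hM'] <;> ring
  have hkey : !![(h : ℚ) * M, 0; 0, 1] * (!![(M : ℚ), (g : ℚ) / h; 0, 1])⁻¹
      = !![(h : ℚ), -(g : ℚ); 0, 1] := by
    rw [hinv]
    ext i j
    fin_cases i <;> fin_cases j <;>
      simp [Matrix.mul_apply, Fin.sum_univ_two] <;> field_simp <;> ring
  rw [hkey]
  refine ⟨⟨⟨one_pos, ⟨!![(h : ℤ), -(g : ℤ); 0, 1], ?_⟩⟩, ?_⟩, ?_⟩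
  · ext i j
    fin_cases i <;> fin_cases j <;> simp
  · rintro r ⟨hr, m, hm⟩
    have h11 : (m 1 1 : ℚ) = r := by
      have := congrFun (congrFun hm 1) 1
      simpa using this
    have hpos : (0 : ℤ) < m 1 1 := by
      have := hr; rw [← h11] at this; exact_mod_cast this
    have : (1 : ℤ) ≤ m 1 1 := hpos
    calc (1 : ℚ) ≤ (m 1 1 : ℚ) := by exact_mod_cast this
      _ = r := h11
  · simp [Matrix.det_fin_two_of]
end
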